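/- Let D be a stable homogeneous diagram in a first-order theory T, working inside a large (D, κ̄)-homogeneous monster model. For every infinite indiscernible set I over a set A and every element b, there exists J ⊆ I with |J| < κ(D) such that I \ J is indiscernible over A ∪ {b}. -/
import Mathlib


open Cardinal

universe u v

namespace Homog

variable (L : FirstOrder.Language.{u, u}) (Ω : Type u) [L.Structure Ω]

/- We work inside a big `(D, κ̄)`-homogeneous monster model `Ω` of the homogeneous diagram
`D` in the first-order theory `T`; all types over small sets realized in `D`-models are
realized in `Ω`, so `S_D^{<ω}(A)` is identified with the set of types of finite tuples of
elements of `Ω` over `A`. -/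

/-- A (complete) type over a subset of the monster, in `n` free variables, coded as the set
of its formulas-with-parameters `⟨m, φ, a⟩` (i.e. `φ(x̄, ā)`). -/
abbrev TypeOver (n : ℕ) : Type u :=
  Set (Σ m : ℕ, L.Formula (Fin n ⊕ Fin m) × (Fin m → Ω))

variable {L Ω}

/-- The complete type of the tuple `b` over the set `A` (in the monster). -/
def tp {n : ℕ} (b : Fin n → Ω) (A : Set Ω) : TypeOver L Ω n :=
  {q | (∀ j, q.2.2 j ∈ A) ∧ q.2.1.Realize (Sum.elim b q.2.2)}

/-- `S_D^{<ω}(A)` in `n` variables: the types over `A` realized (in a `D`-model, hence by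
homogeneity of the monster, in the monster). -/
def SD (A : Set Ω) (n : ℕ) : Set (TypeOver L Ω n) :=
  {p | ∃ b : Fin n → Ω, p = tp b A}

/-- the restriction of a type to a smaller parameter set -/
def restr {n : ℕ} (p : TypeOver L Ω n) (A : Set Ω) : TypeOver L Ω n :=
  {q ∈ p | ∀ j, q.2.2 j ∈ A}

/-- `I` is an indiscernible sequence of `k`-tuples over `B` (indexed by a linear order). -/
def IndiscSeq {ι : Type v} [LinearOrder ι] (B : Set Ω) {k : ℕ}
    (I : ι → (Fin k → Ω)) : Prop :=
  ∀ (n m : ℕ) (s t : Fin n → ι), StrictMono s → StrictMono t →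
    ∀ a : Fin m → Ω, (∀ j, a j ∈ B) →
      ∀ φ : L.Formula ((Fin n × Fin k) ⊕ Fin m),
        (φ.Realize (Sum.elim (fun v => I (s v.1) v.2) a) ↔
         φ.Realize (Sum.elim (fun v => I (t v.1) v.2) a))

/-- `I` is an indiscernible set of elements over `B`. -/
def IndSet {ι : Type v} (B : Set Ω) (I : ι → Ω) : Prop :=
  Function.Injective I ∧
  ∀ (n m : ℕ) (s t : Fin n → ι), Function.Injective s → Function.Injective t →
    ∀ a : Fin m → Ω, (∀ j, a j ∈ B) →
      ∀ φ : L.Formula (Fin n ⊕ Fin m),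
        (φ.Realize (Sum.elim (I ∘ s) a) ↔ φ.Realize (Sum.elim (I ∘ t) a))

/-- `p` strongly splits over `B`: there are an infinite indiscernible sequence
`⟨ā_i : i < ω⟩` over `B` and a formula `φ` with `φ(x̄, ā₀) ∈ p` and `¬φ(x̄, ā₁) ∈ p`. -/
def StrSplits {n : ℕ} (p : TypeOver L Ω n) (B : Set Ω) : Prop :=
  ∃ (k : ℕ) (a : ℕ → (Fin k → Ω)), IndiscSeq (L := L) (ι := ℕ) B a ∧
    ∃ φ : L.Formula (Fin n ⊕ Fin k),
      (⟨k, φ, a 0⟩ : Σ m, L.Formula (Fin n ⊕ Fin m) × (Fin m → Ω)) ∈ p ∧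
      (⟨k, φ.not, a 1⟩ : Σ m, L.Formula (Fin n ⊕ Fin m) × (Fin m → Ω)) ∈ p

variable (L Ω)

/-- `κ(D)`: the least cardinal `κ` such that every type over any set fails to strongly
split over some subset of size `< κ`. -/
noncomputable def kappa : Cardinal.{u} :=
  sInf {κ : Cardinal.{u} | ∀ (n : ℕ) (A : Set Ω) (b : Fin n → Ω),
    ∃ B ⊆ A, #B < κ ∧ ¬ StrSplits (L := L) (tp (L := L) b A) B}

/-- `D` is stable in `λ`: there are at most `λ` types over any set of size at most `λ`. -/
def StableIn (lam : Cardinal.{u}) : Prop :=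
  ∀ A : Set Ω, #A ≤ lam → ∀ n : ℕ, #(SD (L := L) A n) ≤ lam

/-- the average type (in one variable) of the indiscernible set `I` over `A`: the formulas
`φ(x, ā)` with `ā ∈ A` satisfied by at least `κ(D)`-many elements of `I`. -/
def Av {ι : Type u} (I : ι → Ω) (A : Set Ω) : TypeOver L Ω 1 :=
  {q | (∀ j, q.2.2 j ∈ A) ∧
    kappa L Ω ≤ #{i : ι // q.2.1.Realize (Sum.elim (fun _ => I i) q.2.2)}}

/-- `p ∈ S_D^{<ω}(B)` does not fork over `A ⊆ B`: there is `A₀ ⊆ A` of size `< κ(D)` such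
that for every set `C` there is an extension of `p` in `S_D^{<ω}(B ∪ C)` that does not
strongly split over `A₀`. -/
def NotFork {n : ℕ} (p : TypeOver L Ω n) (B A : Set Ω) : Prop :=
  ∃ A₀ ⊆ A, #A₀ < kappa L Ω ∧
    ∀ C : Set Ω, ∃ q ∈ SD (L := L) (B ∪ C) n, p ⊆ q ∧ ¬ StrSplits q A₀

/-- `M` is a `(D, λ)`-homogeneous model (inside the monster): every type over a subset of
`M` of size `< λ` (realized in the monster) is realized in `M`. -/
def IsHomogModel (M : Set Ω) (lam : Cardinal.{u}) : Prop :=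
  ∀ A ⊆ M, #A < lam → ∀ (n : ℕ) (b : Fin n → Ω),
    ∃ c : Fin n → Ω, (∀ j, c j ∈ M) ∧ tp (L := L) c A = tp b A

/-- a type is algebraic (over its domain `A`) if it is realized by a tuple from `A` -/
def IsAlgType {n : ℕ} (p : TypeOver L Ω n) (A : Set Ω) : Prop :=
  ∃ c : Fin n → Ω, (∀ j, c j ∈ A) ∧ tp (L := L) c A = p

open FirstOrder Language Set

variable {L : FirstOrder.Language.{u, u}} {Ω : Type u} [L.Structure Ω]

/-- Equality-pattern version of indiscernibility: tuples with the same equality pattern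
(not necessarily injective) get the same formulas. -/
theorem indset_pattern {ι : Type v} {A : Set Ω} {I : ι → Ω} (hI : IndSet (L := L) A I)
    {n m : ℕ} {s t : Fin n → ι} (hpat : ∀ v w, s v = s w ↔ t v = t w)
    {a : Fin m → Ω} (ha : ∀ j, a j ∈ A) (φ : L.Formula (Fin n ⊕ Fin m)) :
    φ.Realize (Sum.elim (I ∘ s) a) ↔ φ.Realize (Sum.elim (I ∘ t) a) := by
  classical
  set Q : Finset ι := Finset.univ.image s with hQ
  set N := Q.card with hN
  have hmem : ∀ v, s v ∈ Q := fun v => Finset.mem_image_of_mem s (Finset.mem_univ v)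
  set e : Fin N ≃ Q := (Q.equivFin).symm with he
  have hpre : ∀ q : Q, ∃ v, s v = (q : ι) := by
    intro q
    obtain ⟨v, -, hv⟩ := Finset.mem_image.mp q.2
    exact ⟨v, hv⟩
  choose pre hpre' using hpre
  set sh : Fin N → ι := fun q => (e q : ι) with hsh
  set th : Fin N → ι := fun q => t (pre (e q)) with hth
  have hse : ∀ q, s (pre (e q)) = sh q := fun q => hpre' (e q)
  have hshinj : Function.Injective sh :=
    fun q1 q2 h => (Q.equivFin).symm.injective (Subtype.coe_injective h)
  have hthinj : Function.Injective th := by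
    intro q1 q2 h
    apply hshinj
    rw [← hse, ← hse]
    exact (hpat _ _).mpr h
  set π : Fin n → Fin N := fun v => Q.equivFin ⟨s v, hmem v⟩ with hπ
  have hsπ : ∀ v, sh (π v) = s v := by
    intro v; simp only [hsh, hπ, he, Equiv.symm_apply_apply]
  have htπ : ∀ v, th (π v) = t v := by
    intro v
    exact (hpat _ _).mp (by rw [hse, hsπ])
  have key := hI.2 N m sh th hshinj hthinj a ha (φ.relabel (Sum.map π id))
  rw [Formula.realize_relabel, Formula.realize_relabel] at key
  have h1 : (Sum.elim (I ∘ sh) a) ∘ Sum.map π id = Sum.elim (I ∘ s) a := by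
    funext x; rcases x with v | j <;> simp [hsπ]
  have h2 : (Sum.elim (I ∘ th) a) ∘ Sum.map π id = Sum.elim (I ∘ t) a := by
    funext x; rcases x with v | j <;> simp [htπ]
  rw [h1, h2] at key
  exact key

/-- General slot-classification version: assignments that are `I` at indices with matching
equality patterns, and fixed elements of `A` elsewhere, satisfy the same formulas. -/
theorem indset_pattern' {ι : Type v} {A : Set Ω} {I : ι → Ω} (hI : IndSet (L := L) A I)
    {X : Type*} [Fintype X] (cls : X → Prop) [DecidablePred cls] (idxS idxT : X → ι) (val : X → Ω)
    (hval : ∀ x, ¬ cls x → val x ∈ A)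
    (hpat : ∀ x y, cls x → cls y → (idxS x = idxS y ↔ idxT x = idxT y))
    (φ : L.Formula X) :
    φ.Realize (fun x => if cls x then I (idxS x) else val x) ↔
      φ.Realize (fun x => if cls x then I (idxT x) else val x) := by
  classical
  set e1 : {x // cls x} ≃ Fin (Fintype.card {x // cls x}) := Fintype.equivFin _ with he1
  set e2 : {x // ¬ cls x} ≃ Fin (Fintype.card {x // ¬ cls x}) := Fintype.equivFin _ with he2
  set g : X → Fin (Fintype.card {x // cls x}) ⊕ Fin (Fintype.card {x // ¬ cls x}) := fun x =>
    if h : cls x then Sum.inl (e1 ⟨x, h⟩) else Sum.inr (e2 ⟨x, h⟩) with hg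
  set sh : Fin (Fintype.card {x // cls x}) → ι := fun q => idxS (e1.symm q) with hsh
  set th : Fin (Fintype.card {x // cls x}) → ι := fun q => idxT (e1.symm q) with hth
  set av : Fin (Fintype.card {x // ¬ cls x}) → Ω := fun q => val (e2.symm q) with hav
  have hres := indset_pattern hI (s := sh) (t := th)
      (fun v w => hpat _ _ (e1.symm v).2 (e1.symm w).2)
      (fun j => hval _ (e2.symm j).2) (φ.relabel g)
  rw [Formula.realize_relabel, Formula.realize_relabel] at hres
  have h1 : (Sum.elim (I ∘ sh) av) ∘ g = fun x => if cls x then I (idxS x) else val x := by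
    funext x
    by_cases h : cls x <;> simp [hg, hsh, hav, h]
  have h2 : (Sum.elim (I ∘ th) av) ∘ g = fun x => if cls x then I (idxT x) else val x := by
    funext x
    by_cases h : cls x <;> simp [hg, hth, hav, h]
  rw [h1, h2] at hres
  exact hres

theorem strSplits_self_false {n : ℕ} (b : Fin n → Ω) (A : Set Ω) :
    ¬ StrSplits (L := L) (tp (L := L) b A) A := by
  rintro ⟨k, a, hindisc, φ, ⟨h0A, h0⟩, ⟨h1A, h1⟩⟩
  rw [Formula.realize_not] at h1
  apply h1
  have hsm : ∀ c : ℕ, StrictMono (fun _ : Fin 1 => c) := by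
    intro c i j hij
    exact absurd (Subsingleton.elim i j ▸ hij) (lt_irrefl j)
  have heq : a 1 = a 0 := by
    funext j
    have := hindisc 1 k (fun _ => 0) (fun _ => 1) (hsm 0) (hsm 1) (a 0) h0A
      (Term.equal (Term.var (Sum.inl (0, j))) (Term.var (Sum.inr j)))
    simp only [Formula.realize_equal, Term.realize_var, Sum.elim_inl, Sum.elim_inr] at this
    exact this.mp trivial
  rw [heq]
  exact h0

theorem kappa_spec (n : ℕ) (A : Set Ω) (b : Fin n → Ω) :
    ∃ B ⊆ A, #B < kappa L Ω ∧ ¬ StrSplits (L := L) (tp (L := L) b A) B := by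
  have hne : {κ : Cardinal.{u} | ∀ (n : ℕ) (A : Set Ω) (b : Fin n → Ω),
      ∃ B ⊆ A, #B < κ ∧ ¬ StrSplits (L := L) (tp (L := L) b A) B}.Nonempty := by
    refine ⟨Order.succ #Ω, fun n A b => ⟨A, subset_rfl, ?_, strSplits_self_false b A⟩⟩
    exact (Cardinal.mk_set_le A).trans_lt (Order.lt_succ _)
  exact csInf_mem hne n A b

theorem key_step {ι : Type v} {A : Set Ω} {I : ι → Ω} (hind : IndSet (L := L) A I) {b : Ω}
    {B : Set Ω} (hBsub : B ⊆ A ∪ Set.range I)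
    (hB : ¬ StrSplits (L := L) (tp (L := L) (fun _ : Fin 1 => b) (A ∪ Set.range I)) B)
    {n : ℕ} {u u' : Fin n → ι} (hu : Function.Injective u) (hu' : Function.Injective u')
    (hus : ∀ r, I (u r) ∉ B) (hu's : ∀ r, I (u' r) ∉ B)
    (hJc : {i : ι | I i ∉ B}.Infinite)
    (ℓ : Fin n) (hagree : ∀ r, r ≠ ℓ → u r = u' r)
    {m : ℕ} {a : Fin m → Ω} (ha : ∀ j, a j ∈ A ∪ {b})
    (φ : L.Formula (Fin n ⊕ Fin m)) :
    φ.Realize (Sum.elim (I ∘ u) a) → φ.Realize (Sum.elim (I ∘ u') a) := by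
  classical
  intro hP
  by_cases hcase : u ℓ = u' ℓ
  · have huu : u = u' := by
      funext r
      by_cases hr : r = ℓ
      · rw [hr]; exact hcase
      · exact hagree r hr
    rwa [← huu]
  by_contra hnQ
  apply hB
  have hInf : ({i : ι | I i ∉ B} \ (Set.range u ∪ Set.range u')).Infinite :=
    hJc.diff ((Set.finite_range u).union (Set.finite_range u'))
  set e : ℕ → ι := fun j => ((Set.Infinite.natEmbedding _ hInf) j : ι) with he
  have heB : ∀ j, I (e j) ∉ B := fun j => ((Set.Infinite.natEmbedding _ hInf) j).2.1
  have heu : ∀ j, e j ∉ Set.range u := fun j hj =>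
    ((Set.Infinite.natEmbedding _ hInf) j).2.2 (Or.inl hj)
  have heu' : ∀ j, e j ∉ Set.range u' := fun j hj =>
    ((Set.Infinite.natEmbedding _ hInf) j).2.2 (Or.inr hj)
  have heinj : Function.Injective e :=
    fun j1 j2 h => (Set.Infinite.natEmbedding _ hInf).injective (Subtype.coe_injective h)
  set d : ℕ → ι := fun j => match j with
    | 0 => u ℓ
    | 1 => u' ℓ
    | (jj+2) => e (jj+1) with hd
  have hd0 : d 0 = u ℓ := rfl
  have hd1 : d 1 = u' ℓ := rfl
  have hdB : ∀ j, I (d j) ∉ B := by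
    intro j
    rcases j with _ | _ | jj
    · exact hus ℓ
    · exact hu's ℓ
    · exact heB (jj+1)
  have hdfix : ∀ (j : ℕ) (i : ι),
      (I i ∈ B ∨ (∃ r, r ≠ ℓ ∧ i = u r) ∨ i = e 0) → d j ≠ i := by
    intro j i hi hdj
    rcases hi with hiB | ⟨r, hrℓ, rfl⟩ | rfl
    · exact hdB j (hdj ▸ hiB)
    · rcases j with _ | _ | jj
      · exact hrℓ (hu (hdj : u ℓ = u r)).symm
      · have h2 : u' ℓ = u r := hdj
        rw [hagree r hrℓ] at h2
        exact hrℓ (hu' h2).symm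
      · exact heu (jj+1) ⟨r, (hdj : e (jj+1) = u r).symm⟩
    · rcases j with _ | _ | jj
      · exact heu 0 ⟨ℓ, (hdj : u ℓ = e 0)⟩
      · exact heu' 0 ⟨ℓ, (hdj : u' ℓ = e 0)⟩
      · simpa using heinj (hdj : e (jj+1) = e 0)
  have hdinj : Function.Injective d := by
    intro j1 j2 h
    rcases j1 with _ | _ | jj1 <;> rcases j2 with _ | _ | jj2
    · rfl
    · exact absurd (h : u ℓ = u' ℓ) hcase
    · exact absurd ⟨ℓ, (h : u ℓ = e (jj2+1))⟩ (heu (jj2+1))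
    · exact absurd (h : u' ℓ = u ℓ).symm hcase
    · rfl
    · exact absurd ⟨ℓ, (h : u' ℓ = e (jj2+1))⟩ (heu' (jj2+1))
    · exact absurd ⟨ℓ, (h : e (jj1+1) = u ℓ).symm⟩ (heu (jj1+1))
    · exact absurd ⟨ℓ, (h : e (jj1+1) = u' ℓ).symm⟩ (heu' (jj1+1))
    · simpa using heinj (h : e (jj1+1) = e (jj2+1))
  set c : ℕ → (Fin n ⊕ Fin m) → Ω := fun j =>
    Sum.elim (fun r => I (Function.update u ℓ (d j) r))
      (fun r => if a r ∈ A then a r else I (e 0)) with hc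
  set c' : ℕ → Fin (n + m) → Ω := fun j q => c j (finSumFinEquiv.symm q) with hc'
  set g : Fin n ⊕ Fin m → Fin 1 ⊕ Fin (n + m) := fun x => match x with
    | .inl v => .inr (finSumFinEquiv (.inl v))
    | .inr r => if a r ∈ A then .inr (finSumFinEquiv (.inr r)) else .inl 0 with hg
  have hcomp : ∀ j q, c' j q ∈ A ∪ Set.range I := by
    intro j q
    show c j (finSumFinEquiv.symm q) ∈ A ∪ Set.range I
    rcases finSumFinEquiv.symm q with r | r
    · exact Or.inr ⟨_, rfl⟩
    · by_cases har : a r ∈ A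
      · simpa [hc, har] using Or.inl har
      · simpa [hc, har] using Or.inr ⟨e 0, rfl⟩
  have hg0 : (Sum.elim (fun _ : Fin 1 => b) (c' 0)) ∘ g = Sum.elim (I ∘ u) a := by
    funext x
    rcases x with v | r
    · show c' 0 (finSumFinEquiv (.inl v)) = I (u v)
      show c 0 (finSumFinEquiv.symm (finSumFinEquiv (.inl v))) = I (u v)
      rw [Equiv.symm_apply_apply]
      show I (Function.update u ℓ (d 0) v) = I (u v)
      rw [hd0, Function.update_eq_self]
    · by_cases har : a r ∈ A
      · show (Sum.elim (fun _ : Fin 1 => b) (c' 0)) (g (.inr r)) = a r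
        simp only [hg, har, if_true]
        show c 0 (finSumFinEquiv.symm (finSumFinEquiv (.inr r))) = a r
        rw [Equiv.symm_apply_apply]
        simp [hc, har]
      · show (Sum.elim (fun _ : Fin 1 => b) (c' 0)) (g (.inr r)) = a r
        simp only [hg, har, if_false]
        show b = a r
        rcases ha r with h | h
        · exact absurd h har
        · exact (Set.mem_singleton_iff.mp h).symm
  have hupd1 : Function.update u ℓ (d 1) = u' := by
    funext r
    by_cases hr : r = ℓ
    · subst hr
      rw [Function.update_self]
    · rw [Function.update_of_ne hr]
      exact hagree r hr
  have hg1 : (Sum.elim (fun _ : Fin 1 => b) (c' 1)) ∘ g = Sum.elim (I ∘ u') a := by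
    funext x
    rcases x with v | r
    · show c' 1 (finSumFinEquiv (.inl v)) = I (u' v)
      show c 1 (finSumFinEquiv.symm (finSumFinEquiv (.inl v))) = I (u' v)
      rw [Equiv.symm_apply_apply]
      show I (Function.update u ℓ (d 1) v) = I (u' v)
      rw [hupd1]
    · by_cases har : a r ∈ A
      · show (Sum.elim (fun _ : Fin 1 => b) (c' 1)) (g (.inr r)) = a r
        simp only [hg, har, if_true]
        show c 1 (finSumFinEquiv.symm (finSumFinEquiv (.inr r))) = a r
        rw [Equiv.symm_apply_apply]
        simp [hc, har]
      · show (Sum.elim (fun _ : Fin 1 => b) (c' 1)) (g (.inr r)) = a r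
        simp only [hg, har, if_false]
        show b = a r
        rcases ha r with h | h
        · exact absurd h har
        · exact (Set.mem_singleton_iff.mp h).symm
  have hseq : IndiscSeq (L := L) (ι := ℕ) B c' := by
    intro n'' m'' s'' t'' hs'' ht'' a'' ha'' ψ
    have hpick : ∀ j : Fin m'', a'' j ∉ A → ∃ i : ι, I i = a'' j ∧ I i ∈ B := by
      intro j hj
      rcases hBsub (ha'' j) with h | ⟨i, hi⟩
      · exact absurd h hj
      · exact ⟨i, hi, by rw [hi]; exact ha'' j⟩
    choose jIdx hjI hjB using hpick
    set D : (Fin n'' × Fin (n + m)) ⊕ Fin m'' → (ι ⊕ Fin n'') ⊕ Ω :=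
      Sum.elim
        (fun vq : Fin n'' × Fin (n + m) =>
          Sum.elim
            (fun r : Fin n =>
              if r = ℓ then Sum.inl (Sum.inr vq.1) else Sum.inl (Sum.inl (u r)))
            (fun r : Fin m => if a r ∈ A then Sum.inr (a r) else Sum.inl (Sum.inl (e 0)))
            (finSumFinEquiv.symm vq.2))
        (fun j => if h : a'' j ∈ A then Sum.inr (a'' j) else Sum.inl (Sum.inl (jIdx j h)))
      with hD
    set cls : (Fin n'' × Fin (n + m)) ⊕ Fin m'' → Prop :=
      fun x => (D x).isLeft = true with hcls
    set idx : (Fin n'' → ℕ) → (Fin n'' × Fin (n + m)) ⊕ Fin m'' → ι := fun σ x =>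
      Sum.elim (Sum.elim id (fun v => d (σ v))) (fun _ => u ℓ) (D x) with hidx
    set val : (Fin n'' × Fin (n + m)) ⊕ Fin m'' → Ω := fun x =>
      Sum.elim (fun _ => b) id (D x) with hval
    have hvalA : ∀ x, ¬ cls x → val x ∈ A := by
      intro x hx
      rcases x with ⟨v, q⟩ | j
      · rcases hq : finSumFinEquiv.symm q with r | r
        · by_cases hr : r = ℓ <;> simp [hcls, hD, hq, hr] at hx
        · by_cases har : a r ∈ A
          · simpa [hval, hD, hq, har] using har
          · simp [hcls, hD, hq, har] at hx
      · by_cases haj : a'' j ∈ A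
        · simpa [hval, hD, haj] using haj
        · simp [hcls, hD, haj] at hx
    have hfixmem : ∀ x i, D x = Sum.inl (Sum.inl i) →
        (I i ∈ B ∨ (∃ r, r ≠ ℓ ∧ i = u r) ∨ i = e 0) := by
      intro x i hx
      rcases x with ⟨v, q⟩ | j
      · rcases hq : finSumFinEquiv.symm q with r | r
        · by_cases hr : r = ℓ
          · simp [hD, hq, hr] at hx
          · simp [hD, hq, hr] at hx
            exact Or.inr (Or.inl ⟨r, hr, hx.symm⟩)
        · by_cases har : a r ∈ A
          · simp [hD, hq, har] at hx
          · simp [hD, hq, har] at hx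
            exact Or.inr (Or.inr hx.symm)
      · by_cases haj : a'' j ∈ A
        · simp [hD, haj] at hx
        · simp [hD, haj] at hx
          refine Or.inl ?_
          rw [← hx]
          exact hjB j haj
    have hpat : ∀ x y, cls x → cls y →
        (idx s'' x = idx s'' y ↔ idx t'' x = idx t'' y) := by
      intro x y hx hy
      rcases hDx : D x with z | o
      · rcases hDy : D y with z' | o'
        · rcases z with i | v <;> rcases z' with i' | w
          · simp [hidx, hDx, hDy]
          · simp only [hidx, hDx, hDy, Sum.elim_inl, Sum.elim_inr, id]
            constructor
            · intro h
              exact absurd h.symm (hdfix (s'' w) i (hfixmem x i hDx))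
            · intro h
              exact absurd h.symm (hdfix (t'' w) i (hfixmem x i hDx))
          · simp only [hidx, hDx, hDy, Sum.elim_inl, Sum.elim_inr, id]
            constructor
            · intro h
              exact absurd h (hdfix (s'' v) i' (hfixmem y i' hDy))
            · intro h
              exact absurd h (hdfix (t'' v) i' (hfixmem y i' hDy))
          · simp only [hidx, hDx, hDy, Sum.elim_inl, Sum.elim_inr, id]
            rw [hdinj.eq_iff, hdinj.eq_iff, hs''.injective.eq_iff, ht''.injective.eq_iff]
        · simp [hcls, hDy] at hy
      · simp [hcls, hDx] at hx
    have hmain := indset_pattern' hind cls (idx s'') (idx t'') val hvalA hpat ψ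
    have hS : ∀ σ : Fin n'' → ℕ, (fun x => if cls x then I (idx σ x) else val x)
        = Sum.elim (fun v : Fin n'' × Fin (n + m) => c' (σ v.1) v.2) a'' := by
      intro σ
      funext x
      rcases x with ⟨v, q⟩ | j
      · show _ = c' (σ v) q
        have hcq : c' (σ v) q = c (σ v) (finSumFinEquiv.symm q) := rfl
        rcases hq : finSumFinEquiv.symm q with r | r
        · by_cases hr : r = ℓ
          · simp [hcls, hidx, hval, hD, hq, hr, hcq, hc]
          · simp [hcls, hidx, hval, hD, hq, hr, hcq, hc, Function.update_of_ne hr]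
        · by_cases har : a r ∈ A <;>
            simp [hcls, hidx, hval, hD, hq, har, hcq, hc]
      · by_cases haj : a'' j ∈ A
        · simp [hcls, hval, hD, haj]
        · simp [hcls, hidx, hval, hD, haj, hjI j haj]
    rw [hS s'', hS t''] at hmain
    exact hmain
  refine ⟨n + m, c', hseq, φ.relabel g, ⟨hcomp 0, ?_⟩, ⟨hcomp 1, ?_⟩⟩
  · show (φ.relabel g).Realize (Sum.elim (fun _ : Fin 1 => b) (c' 0))
    rw [Formula.realize_relabel, hg0]
    exact hP
  · show (Formula.not (φ.relabel g)).Realize (Sum.elim (fun _ : Fin 1 => b) (c' 1))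
    rw [Formula.realize_not, Formula.realize_relabel, hg1]
    exact hnQ
end Homog

open Homog in
/-- Let `D` be a stable homogeneous diagram (inside a monster model `Ω`).
For every infinite indiscernible set `I` over a set `A` and every element `b`, there is
`J ⊆ I` with `|J| < κ(D)` such that `I \ J` is indiscernible over `A ∪ {b}`. -/
theorem indiscernible_remove_small_set {L : FirstOrder.Language.{u, u}} {Ω : Type u}
    [L.Structure Ω]
    (hstable : ∃ μ : Cardinal.{u}, L.card + Cardinal.aleph0 ≤ μ ∧ StableIn L Ω μ)
    (A : Set Ω) (ι : Type u) (I : ι → Ω) (hinf : Infinite ι)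
    (hind : IndSet (L := L) A I) (b : Ω) :
    ∃ J : Set ι, #J < kappa L Ω ∧
      IndSet (L := L) (A ∪ {b}) (fun i : ↥(Jᶜ) => I i) := by
  classical
  obtain ⟨B, hBsub, hBcard, hBns⟩ :=
    kappa_spec (L := L) (Ω := Ω) 1 (A ∪ Set.range I) (fun _ => b)
  set J : Set ι := {i | I i ∈ B} with hJ
  have hJcard : #J < kappa L Ω := by
    refine lt_of_le_of_lt ?_ hBcard
    refine Cardinal.mk_le_of_injective (f := fun i : J => (⟨I i.1, i.2⟩ : B)) ?_
    intro i1 i2 h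
    exact Subtype.ext (hind.1 (congrArg Subtype.val h))
  by_cases hc : (Jᶜ : Set ι).Infinite
  · -- main case: the complement of `J` is infinite
    have hJcset : {i : ι | I i ∉ B}.Infinite := hc
    refine ⟨J, hJcard, ?_, ?_⟩
    · intro x y h
      exact Subtype.ext (hind.1 h)
    · intro n m s t hs ht a ha φ
      set s' : Fin n → ι := fun r => (s r).1 with hs'
      set t' : Fin n → ι := fun r => (t r).1 with ht'
      have hs'inj : Function.Injective s' :=
        fun r1 r2 h => hs (Subtype.ext h)
      have ht'inj : Function.Injective t' :=
        fun r1 r2 h => ht (Subtype.ext h)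
      have hsB : ∀ r, I (s' r) ∉ B := fun r => (s r).2
      have htB : ∀ r, I (t' r) ∉ B := fun r => (t r).2
      have hInf2 : ((Jᶜ : Set ι) \ (Set.range s' ∪ Set.range t')).Infinite :=
        hc.diff ((Set.finite_range s').union (Set.finite_range t'))
      set w : Fin n → ι := fun r => ((Set.Infinite.natEmbedding _ hInf2) r.1 : ι) with hw
      have hwJ : ∀ r, I (w r) ∉ B :=
        fun r => ((Set.Infinite.natEmbedding _ hInf2) r.1).2.1
      have hws : ∀ r r', w r ≠ s' r' := by
        intro r r' h
        exact ((Set.Infinite.natEmbedding _ hInf2) r.1).2.2 (Or.inl ⟨r', h.symm⟩)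
      have hwt : ∀ r r', w r ≠ t' r' := by
        intro r r' h
        exact ((Set.Infinite.natEmbedding _ hInf2) r.1).2.2 (Or.inr ⟨r', h.symm⟩)
      have hwinj : Function.Injective w := by
        intro r1 r2 h
        have h2 := (Set.Infinite.natEmbedding _ hInf2).injective (Subtype.ext h)
        exact Fin.val_injective h2
      have main : ∀ base : Fin n → ι, Function.Injective base → (∀ r, I (base r) ∉ B) →
          (∀ r r', w r ≠ base r') →
          (φ.Realize (Sum.elim (I ∘ base) a) ↔ φ.Realize (Sum.elim (I ∘ w) a)) := by
        intro base hbinj hbB hbw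
        have hmixinj : ∀ i : ℕ,
            Function.Injective (fun r : Fin n => if (r : ℕ) < i then w r else base r) := by
          intro i r1 r2 h
          by_cases h1 : (r1 : ℕ) < i <;> by_cases h2 : (r2 : ℕ) < i <;>
            simp only [h1, h2, if_true, if_false] at h
          · exact hwinj h
          · exact absurd h (hbw r1 r2)
          · exact absurd h.symm (hbw r2 r1)
          · exact hbinj h
        have hmixB : ∀ (i : ℕ) (r : Fin n),
            I ((fun r : Fin n => if (r : ℕ) < i then w r else base r) r) ∉ B := by
          intro i r
          by_cases h1 : (r : ℕ) < i <;> simp only [h1, if_true, if_false]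
          · exact hwJ r
          · exact hbB r
        have step : ∀ i : ℕ, φ.Realize (Sum.elim (I ∘ base) a) ↔
            φ.Realize (Sum.elim (I ∘ fun r : Fin n => if (r : ℕ) < i then w r else base r) a) := by
          intro i
          induction i with
          | zero =>
            have : (fun r : Fin n => if (r : ℕ) < 0 then w r else base r) = base := by
              funext r; simp
            rw [this]
          | succ i ih =>
            rcases Nat.lt_or_ge i n with hin | hin
            · have hagree : ∀ r : Fin n, r ≠ ⟨i, hin⟩ →
                  (fun r : Fin n => if (r : ℕ) < i then w r else base r) r =
                  (fun r : Fin n => if (r : ℕ) < i + 1 then w r else base r) r := by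
                intro r hr
                have hri : (r : ℕ) ≠ i := fun h => hr (Fin.ext h)
                by_cases h1 : (r : ℕ) < i
                · simp only [h1, if_true, Nat.lt_succ_of_lt h1]
                · have h2 : ¬ (r : ℕ) < i + 1 := by omega
                  simp only [h1, h2, if_false]
              refine ih.trans ⟨?_, ?_⟩
              · exact key_step hind hBsub hBns (hmixinj i) (hmixinj (i+1))
                  (hmixB i) (hmixB (i+1)) hJcset ⟨i, hin⟩ hagree ha φ
              · exact key_step hind hBsub hBns (hmixinj (i+1)) (hmixinj i)
                  (hmixB (i+1)) (hmixB i) hJcset ⟨i, hin⟩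
                  (fun r hr => (hagree r hr).symm) ha φ
            · have : (fun r : Fin n => if (r : ℕ) < i + 1 then w r else base r) =
                  (fun r : Fin n => if (r : ℕ) < i then w r else base r) := by
                funext r
                have h1 : (r : ℕ) < i := lt_of_lt_of_le r.isLt hin
                simp only [h1, Nat.lt_succ_of_lt h1, if_true]
              rw [this]
              exact ih
        have hfin : (fun r : Fin n => if (r : ℕ) < n then w r else base r) = w := by
          funext r; simp [r.isLt]
        have := step n
        rwa [hfin] at this
      have h1 := main s' hs'inj hsB hws
      have h2 := main t' ht'inj htB hwt
      exact h1.trans h2.symm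
  · -- degenerate case: the complement of `J` is finite; take all of `ι`
    have hJcfin : (Jᶜ : Set ι).Finite := Set.not_infinite.mp hc
    have hJinf : J.Infinite := by
      have := hJcfin.infinite_compl
      rwa [compl_compl] at this
    have hcard : #ι < kappa L Ω := by
      have h1 : #J + #(Jᶜ : Set ι) = #ι := Cardinal.mk_sum_compl J
      have hJal : Cardinal.aleph0 ≤ #J := by
        have := hJinf.to_subtype
        exact Cardinal.aleph0_le_mk ↥J
      have h2 : #J + #(Jᶜ : Set ι) = #J :=
        Cardinal.add_eq_left hJal (hJcfin.lt_aleph0.le.trans hJal)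
      calc #ι = #J := by rw [← h1, h2]
        _ < kappa L Ω := hJcard
    refine ⟨Set.univ, by rwa [Cardinal.mk_univ], ?_, ?_⟩
    · intro x y h
      exact absurd (Set.mem_univ x.1) x.2
    · intro n m s t hs ht a ha φ
      match n, s, t with
      | 0, s, t => rw [Subsingleton.elim s t]
      | (k+1), s, t => exact absurd (Set.mem_univ (s 0).1) (s 0).2
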